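/- With the DPnP kernel definitions, define the auxiliary kernel K_aux(x, x') = ∫ K_DDS(x, z) K_PCS(z, x') dz and the density μ_η(x) = p̃_η(x) e^{L(x)} / ∫ p̃_η e^{L} (the normalizing integral equals ∫ p⋆ q̃_η and is finite and positive). Then: (i) K_aux is reversible with respect to μ_η, i.e., μ_η(x) K_aux(x, x') = μ_η(x') K_aux(x', x) for all x, x'; and (ii) μ_η pushes forward under K_DDS to π_η: ∫ μ_η(x) K_DDS(x, x') dx = π_η(x') for every x', where π_η(x) = p⋆(x) q̃_η(x) / ∫ p⋆ q̃_η. -/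

import Mathlib

open MeasureTheory

/-- `q̃_η(x) = ∫ e^{L(x')} e^{−‖x−x'‖²/(2η²)} dx'`. -/
noncomputable def qEta {d : ℕ} (L : EuclideanSpace ℝ (Fin d) → ℝ) (η : ℝ)
    (x : EuclideanSpace ℝ (Fin d)) : ℝ :=
  ∫ x', Real.exp (L x') * Real.exp (-‖x - x'‖ ^ 2 / (2 * η ^ 2))

/-- `p̃_η(x) = ∫ p⋆(x') e^{−‖x−x'‖²/(2η²)} dx'`. -/
noncomputable def pEta {d : ℕ} (p : EuclideanSpace ℝ (Fin d) → ℝ) (η : ℝ)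
    (x : EuclideanSpace ℝ (Fin d)) : ℝ :=
  ∫ x', p x' * Real.exp (-‖x - x'‖ ^ 2 / (2 * η ^ 2))

/-- The proximal consistency sampler kernel
`K_PCS(x, x') = e^{L(x') − ‖x'−x‖²/(2η²)} / q̃_η(x)`. -/
noncomputable def KPCS {d : ℕ} (L : EuclideanSpace ℝ (Fin d) → ℝ) (η : ℝ)
    (x x' : EuclideanSpace ℝ (Fin d)) : ℝ :=
  Real.exp (L x' - ‖x' - x‖ ^ 2 / (2 * η ^ 2)) / qEta L η x

/-- The denoising diffusion sampler kernel
`K_DDS(x, x') = p⋆(x') e^{−‖x'−x‖²/(2η²)} / p̃_η(x)`. -/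
noncomputable def KDDS {d : ℕ} (p : EuclideanSpace ℝ (Fin d) → ℝ) (η : ℝ)
    (x x' : EuclideanSpace ℝ (Fin d)) : ℝ :=
  p x' * Real.exp (-‖x' - x‖ ^ 2 / (2 * η ^ 2)) / pEta p η x

/-- The composite DPnP kernel `K_DPnP(x, x') = ∫ K_PCS(x, z) K_DDS(z, x') dz`. -/
noncomputable def KDPnP {d : ℕ} (p L : EuclideanSpace ℝ (Fin d) → ℝ) (η : ℝ)
    (x x' : EuclideanSpace ℝ (Fin d)) : ℝ :=
  ∫ z, KPCS L η x z * KDDS p η z x'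

/-- Action of a Markov transition density on a probability density:
`(p ∘ K)(x') = ∫ p(x) K(x, x') dx`. -/
noncomputable def applyKernel {d : ℕ} (K : EuclideanSpace ℝ (Fin d) → EuclideanSpace ℝ (Fin d) → ℝ)
    (p : EuclideanSpace ℝ (Fin d) → ℝ) : EuclideanSpace ℝ (Fin d) → ℝ :=
  fun x' => ∫ x, p x * K x x'

/-- Total variation distance between two densities: `TV(p, q) = ∫ |p(x) − q(x)| dx`. -/
noncomputable def tvDist {d : ℕ} (p q : EuclideanSpace ℝ (Fin d) → ℝ) : ℝ :=
  ∫ x, |p x - q x|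

/-- Chi-squared divergence: `χ²(p ‖ q) = ∫ (p(x) − q(x))² / q(x) dx`. -/
noncomputable def chiSq {d : ℕ} (p q : EuclideanSpace ℝ (Fin d) → ℝ) : ℝ :=
  ∫ x, (p x - q x) ^ 2 / q x

/-- The stationary density `π_η(x) = p⋆(x) q̃_η(x) / ∫ p⋆ q̃_η`. -/
noncomputable def piEta {d : ℕ} (p L : EuclideanSpace ℝ (Fin d) → ℝ) (η : ℝ)
    (x : EuclideanSpace ℝ (Fin d)) : ℝ :=
  p x * qEta L η x / ∫ y, p y * qEta L η y

/-- The auxiliary kernel `K_aux(x, x') = ∫ K_DDS(x, z) K_PCS(z, x') dz`. -/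
noncomputable def KAux {d : ℕ} (p L : EuclideanSpace ℝ (Fin d) → ℝ) (η : ℝ)
    (x x' : EuclideanSpace ℝ (Fin d)) : ℝ :=
  ∫ z, KDDS p η x z * KPCS L η z x'

/-- The auxiliary density `μ_η(x) = p̃_η(x) e^{L(x)} / ∫ p̃_η e^{L}`. -/
noncomputable def muEta {d : ℕ} (p L : EuclideanSpace ℝ (Fin d) → ℝ) (η : ℝ)
    (x : EuclideanSpace ℝ (Fin d)) : ℝ :=
  pEta p η x * Real.exp (L x) / ∫ y, pEta p η y * Real.exp (L y)

/-! Both claims come from Fubini and pointwise algebra. Writing `g(x, z)` for the Gaussian factor,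
`K_aux(x, x') = e^{L(x')} S(x, x') / p̃_η(x)` where
`S(x, x') = ∫ p⋆(z) g(x, z) g(z, x') / q̃_η(z) dz` (`auxSymKernel`) is symmetric, so
`μ_η(x) K_aux(x, x') ∝ e^{L(x)} e^{L(x')} S(x, x')` is symmetric. Integrating
`μ_η(x) K_DDS(x, x') ∝ p⋆(x') e^{L(x)} g(x', x)` over `x` gives `p⋆(x') q̃_η(x')`, and swapping the
order of integration in `∫∫ p⋆(y) g(x, y) e^{L(x)}` identifies the two normalizing integrals. -/

section General

variable {α : Type*} [MeasurableSpace α] {μ : Measure α}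

theorem integral_pos_of_forall_pos [NeZero μ] {f : α → ℝ} (hf : ∀ x, 0 < f x)
    (hfi : Integrable f μ) : 0 < ∫ x, f x ∂μ := by
  rw [integral_pos_iff_support_of_nonneg (fun x => (hf x).le) hfi,
    Function.support_eq_univ fun x => (hf x).ne']
  exact Measure.measure_univ_pos.2 (NeZero.ne μ)

theorem integral_mul_pos_of_forall_pos {f g : α → ℝ} (hf0 : 0 ≤ f) (hf : 0 < ∫ x, f x ∂μ)
    (hg : ∀ x, 0 < g x) (hfg : Integrable (fun x => f x * g x) μ) :
    0 < ∫ x, f x * g x ∂μ := by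
  have hsupp : Function.support (fun x => f x * g x) = Function.support f := by
    rw [Function.support_mul, Function.support_eq_univ fun x => (hg x).ne', Set.inter_univ]
  rw [integral_pos_iff_support_of_nonneg (fun x => mul_nonneg (hf0 x) (hg x).le) hfg, hsupp,
    ← integral_pos_iff_support_of_nonneg hf0 (Integrable.of_integral_ne_zero hf.ne')]
  exact hf

theorem norm_exp_neg_sq_div_le_one (r η : ℝ) : ‖Real.exp (-r ^ 2 / (2 * η ^ 2))‖ ≤ 1 := by
  rw [Real.norm_of_nonneg (Real.exp_pos _).le, Real.exp_le_one_iff]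
  exact div_nonpos_of_nonpos_of_nonneg (neg_nonpos.2 (sq_nonneg _)) (by positivity)

end General

section Gaussian

variable {V : Type*} [NormedAddCommGroup V] [InnerProductSpace ℝ V] [FiniteDimensional ℝ V]
  [MeasurableSpace V] [BorelSpace V] {η : ℝ}

theorem integrable_exp_neg_mul_sq_norm {b : ℝ} (hb : 0 < b) :
    Integrable fun v : V => Real.exp (-b * ‖v‖ ^ 2) := by
  refine (GaussianFourier.integrable_cexp_neg_mul_sq_norm_add (b := b) (by simpa using hb) 0
    (0 : V)).norm.congr (ae_of_all _ fun v => ?_)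
  simp [Complex.norm_exp, ← Complex.ofReal_pow]

theorem MeasureTheory.Integrable.mul_exp_neg_sq_norm_sub_div_mul_prod {f h : V → ℝ} {C : ℝ}
    (hf : Integrable f) (hh : AEStronglyMeasurable h) (hhC : ∀ x, ‖h x‖ ≤ C) (hη : η ≠ 0) :
    Integrable (fun q : V × V => f q.2 * Real.exp (-‖q.1 - q.2‖ ^ 2 / (2 * η ^ 2)) * h q.1)
      (volume.prod volume) := by
  have hgauss : Integrable fun v : V => Real.exp (-‖v‖ ^ 2 / (2 * η ^ 2)) :=
    (integrable_exp_neg_mul_sq_norm (b := (2 * η ^ 2)⁻¹) (by positivity)).congr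
      (ae_of_all _ fun v => by simp only [neg_mul, ← div_eq_inv_mul, neg_div])
  have hconv := hf.convolution_integrand (ContinuousLinearMap.mul ℝ ℝ) hgauss (μ := volume)
  simpa only [ContinuousLinearMap.mul_apply', mul_comm _ (h _)] using
    hconv.bdd_mul (c := C) hh.comp_fst (ae_of_all _ fun q => hhC q.1)

end Gaussian

section DPnP

variable {d : ℕ} {p L : EuclideanSpace ℝ (Fin d) → ℝ} {η : ℝ}

theorem pEta_pos (hp0 : ∀ x, 0 ≤ p x) (hp : 0 < ∫ x, p x) (x : EuclideanSpace ℝ (Fin d)) :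
    0 < pEta p η x :=
  integral_mul_pos_of_forall_pos hp0 hp (fun _ => Real.exp_pos _)
    ((Integrable.of_integral_ne_zero hp.ne').mul_bdd (by fun_prop)
      (ae_of_all _ fun z => norm_exp_neg_sq_div_le_one _ η))

theorem integrable_pEta_integrand_mul_exp (hp : Integrable p) (hLm : Measurable L)
    (hLb : BddAbove (Set.range L)) (hη : η ≠ 0) :
    Integrable (fun q : EuclideanSpace ℝ (Fin d) × EuclideanSpace ℝ (Fin d) =>
      p q.2 * Real.exp (-‖q.1 - q.2‖ ^ 2 / (2 * η ^ 2)) * Real.exp (L q.1))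
      (volume.prod volume) := by
  obtain ⟨C, hC⟩ := hLb
  refine hp.mul_exp_neg_sq_norm_sub_div_mul_prod (C := Real.exp C)
    hLm.exp.aestronglyMeasurable (fun x => ?_) hη
  rw [Real.norm_of_nonneg (Real.exp_pos _).le]
  exact Real.exp_le_exp.2 (hC ⟨x, rfl⟩)

theorem integrable_pEta_mul_exp (hp : Integrable p) (hLm : Measurable L)
    (hLb : BddAbove (Set.range L)) (hη : η ≠ 0) :
    Integrable fun x => pEta p η x * Real.exp (L x) :=
  (integrable_pEta_integrand_mul_exp hp hLm hLb hη).integral_prod_left.congr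
    (ae_of_all _ fun _ => by simp only [pEta, integral_mul_const])

theorem integral_pEta_mul_exp (hp : Integrable p) (hLm : Measurable L)
    (hLb : BddAbove (Set.range L)) (hη : η ≠ 0) :
    ∫ x, pEta p η x * Real.exp (L x) = ∫ x, p x * qEta L η x :=
  calc ∫ x, pEta p η x * Real.exp (L x)
      = ∫ x, ∫ y, p y * Real.exp (-‖x - y‖ ^ 2 / (2 * η ^ 2)) * Real.exp (L x) := by
        simp only [pEta, integral_mul_const]
    _ = ∫ y, ∫ x, p y * Real.exp (-‖x - y‖ ^ 2 / (2 * η ^ 2)) * Real.exp (L x) :=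
        integral_integral_swap (integrable_pEta_integrand_mul_exp hp hLm hLb hη)
    _ = ∫ y, p y * qEta L η y := by
        simp only [qEta, ← integral_const_mul, norm_sub_rev _ (_ : EuclideanSpace ℝ (Fin d))]
        congr with y
        congr with x
        ring

noncomputable def auxSymKernel (p L : EuclideanSpace ℝ (Fin d) → ℝ) (η : ℝ)
    (x x' : EuclideanSpace ℝ (Fin d)) : ℝ :=
  ∫ z, p z * Real.exp (-‖z - x‖ ^ 2 / (2 * η ^ 2)) * Real.exp (-‖z - x'‖ ^ 2 / (2 * η ^ 2)) /
    qEta L η z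

theorem auxSymKernel_comm (x x' : EuclideanSpace ℝ (Fin d)) :
    auxSymKernel p L η x x' = auxSymKernel p L η x' x := by
  simp only [auxSymKernel, mul_right_comm (p _)]

theorem KAux_eq (x x' : EuclideanSpace ℝ (Fin d)) :
    KAux p L η x x' = Real.exp (L x') * auxSymKernel p L η x x' / pEta p η x := by
  simp only [KAux, auxSymKernel, ← integral_const_mul, ← integral_div]
  congr with z
  rw [KDDS, KPCS, sub_eq_add_neg (L x'), Real.exp_add, norm_sub_rev x' z, ← neg_div]
  ring

theorem muEta_mul_KAux_comm {x x' : EuclideanSpace ℝ (Fin d)} (hx : pEta p η x ≠ 0)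
    (hx' : pEta p η x' ≠ 0) :
    muEta p L η x * KAux p L η x x' = muEta p L η x' * KAux p L η x' x := by
  rw [muEta, muEta, KAux_eq, KAux_eq, auxSymKernel_comm x']
  field_simp

theorem integral_muEta_mul_KDDS (hpEta : ∀ x, pEta p η x ≠ 0) (x' : EuclideanSpace ℝ (Fin d)) :
    ∫ x, muEta p L η x * KDDS p η x x' =
      p x' * qEta L η x' / ∫ y, pEta p η y * Real.exp (L y) := by
  have hpointwise : ∀ x, muEta p L η x * KDDS p η x x' =
      p x' / (∫ y, pEta p η y * Real.exp (L y)) *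
        (Real.exp (L x) * Real.exp (-‖x' - x‖ ^ 2 / (2 * η ^ 2))) := fun x => by
    rw [muEta, KDDS]
    field_simp [hpEta x]
  simp only [hpointwise, integral_const_mul, qEta]
  ring

end DPnP

theorem stmt7_general {d : ℕ} (p L : EuclideanSpace ℝ (Fin d) → ℝ)
    (hp0 : ∀ x, 0 ≤ p x) (hp1 : ∫ x, p x = 1)
    (hLm : Measurable L) (hLb : BddAbove (Set.range L))
    (η : ℝ) (hη : 0 < η) :
    Integrable (fun x => pEta p η x * Real.exp (L x))
      ∧ (∫ x, pEta p η x * Real.exp (L x)) = (∫ x, p x * qEta L η x)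
      ∧ (0 < ∫ x, pEta p η x * Real.exp (L x))
      ∧ (∀ x x', muEta p L η x * KAux p L η x x' = muEta p L η x' * KAux p L η x' x)
      ∧ (∀ x', ∫ x, muEta p L η x * KDDS p η x x' = piEta p L η x') := by
  have hp : Integrable p := integrable_of_integral_eq_one hp1
  have hpEta : ∀ x, 0 < pEta p η x := pEta_pos hp0 (hp1 ▸ one_pos)
  have hint := integrable_pEta_mul_exp hp hLm hLb hη.ne'
  have hZ := integral_pEta_mul_exp hp hLm hLb hη.ne'
  refine ⟨hint, hZ, integral_pos_of_forall_pos (fun x => mul_pos (hpEta x) (Real.exp_pos _)) hint,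
    fun x x' => muEta_mul_KAux_comm (hpEta x).ne' (hpEta x').ne', fun x' => ?_⟩
  rw [integral_muEta_mul_KDDS (fun x => (hpEta x).ne'), hZ, piEta]

/-- The normalizing integral of `μ_η` is finite and positive and equals `∫ p⋆ q̃_η`;
`K_aux` is reversible with respect to `μ_η`; and `μ_η` pushes forward under `K_DDS` to `π_η`. -/
theorem stmt7 {d : ℕ} (p L : EuclideanSpace ℝ (Fin d) → ℝ)
    (hpm : Measurable p) (hp0 : ∀ x, 0 ≤ p x) (hp1 : ∫ x, p x = 1)
    (hLm : Measurable L) (hLb : BddAbove (Set.range L))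
    (η : ℝ) (hη : 0 < η) :
    Integrable (fun x => pEta p η x * Real.exp (L x))
      ∧ (∫ x, pEta p η x * Real.exp (L x)) = (∫ x, p x * qEta L η x)
      ∧ (0 < ∫ x, pEta p η x * Real.exp (L x))
      ∧ (∀ x x', muEta p L η x * KAux p L η x x' = muEta p L η x' * KAux p L η x' x)
      ∧ (∀ x', ∫ x, muEta p L η x * KDDS p η x x' = piEta p L η x') :=
  stmt7_general p L hp0 hp1 hLm hLb η hη
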